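/- Let μ(A) = ν(A)² with ν Lebesgue measure on [0,1]. For 0 ≤ a < b ≤ 1 and n ≥ 0, ∫_a^b xⁿ dμ = (2/((n+1)(n+2)))·(b^(n+2) - a^(n+2)) - (2a^(n+1)/(n+1))·(b-a). -/

import Mathlib

/-! For `n ≠ 0` substitute `lam = x ^ n`. For `x > 0` the superlevel set `{y ∈ (a, b) | y ^ n > x ^ n}`
is the interval `(max a x, b)`, so the integrand becomes `n x ^ (n - 1) (b - max a x)₊ ²`: this is
`n x ^ (n - 1) (b - a) ²` on `[0, a]`, `n x ^ (n - 1) (b - x) ²` on `[a, b]` and `0` beyond `b`, and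
both pieces are integrated by an explicit antiderivative. For `n = 0` the superlevel set is
`(a, b)` for `lam < 1` and empty otherwise. -/

open MeasureTheory Set

/-- The (Lebesgue)² quantum measure: the square of Lebesgue measure. -/
noncomputable def lebSq (A : Set ℝ) : ℝ := (volume A).toReal ^ 2

lemma lebSq_Ioo (p q : ℝ) : lebSq (Ioo p q) = max (q - p) 0 ^ 2 := by
  rw [lebSq, Real.volume_Ioo, ENNReal.toReal_ofReal']

lemma Ioo_inter_setOf_pow_lt_pow {a x : ℝ} (ha : 0 ≤ a) (hx : 0 ≤ x) (b : ℝ) {n : ℕ}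
    (hn : n ≠ 0) : Ioo a b ∩ {y | x ^ n < y ^ n} = Ioo (max a x) b := by
  ext y
  simp only [mem_inter_iff, mem_Ioo, mem_ofPred_eq, max_lt_iff]
  constructor
  · rintro ⟨⟨hay, hyb⟩, hxy⟩
    exact ⟨⟨hay, (pow_lt_pow_iff_left₀ hx (ha.trans hay.le) hn).1 hxy⟩, hyb⟩
  · rintro ⟨⟨hay, hxy⟩, hyb⟩
    exact ⟨⟨hay, hyb⟩, pow_lt_pow_left₀ hxy hx hn⟩

theorem integral_Ioi_comp_pow {E : Type*} [NormedAddCommGroup E] [NormedSpace ℝ E]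
    {n : ℕ} (hn : n ≠ 0) (g : ℝ → E) :
    ∫ x in Ioi 0, (n * x ^ (n - 1) : ℝ) • g (x ^ n) = ∫ y in Ioi 0, g y := by
  rw [← integral_comp_rpow_Ioi_of_pos (g := g) (Nat.cast_pos.2 (Nat.pos_of_ne_zero hn))]
  refine setIntegral_congr_fun measurableSet_Ioi fun x _ => ?_
  rw [Real.rpow_natCast, ← Nat.cast_pred (Nat.pos_of_ne_zero hn), Real.rpow_natCast]

theorem integral_pow_pred_mul_sq_sub {n : ℕ} (hn : n ≠ 0) (a b : ℝ) :
    ∫ x in a..b, n * x ^ (n - 1) * (b - x) ^ 2 =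
      b ^ 2 * (b ^ n - a ^ n) - 2 * b * n / (n + 1) * (b ^ (n + 1) - a ^ (n + 1))
        + n / (n + 2) * (b ^ (n + 2) - a ^ (n + 2)) := by
  have hderiv : ∀ x, HasDerivAt (fun y => b ^ 2 * y ^ n - 2 * b * n / (n + 1) * y ^ (n + 1)
      + n / (n + 2) * y ^ (n + 2)) (n * x ^ (n - 1) * (b - x) ^ 2) x := by
    intro x
    refine ((((hasDerivAt_pow n x).const_mul (b ^ 2)).sub
      ((hasDerivAt_pow (n + 1) x).const_mul (2 * b * n / (n + 1)))).add
      ((hasDerivAt_pow (n + 2) x).const_mul ((n : ℝ) / (n + 2)))).congr_deriv ?_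
    obtain ⟨m, rfl⟩ := Nat.exists_eq_add_one_of_ne_zero hn
    push_cast
    field_simp
    ring
  rw [intervalIntegral.integral_eq_sub_of_hasDerivAt (fun x _ => hderiv x)
    (Continuous.intervalIntegrable (by fun_prop) _ _)]
  ring

theorem integral_lebSq_Ioo_inter_pow_gt {n : ℕ} (hn : n ≠ 0) {a b : ℝ} (ha : 0 ≤ a)
    (hab : a ≤ b) :
    ∫ lam in Ioi 0, lebSq (Ioo a b ∩ {x | x ^ n > lam}) =
      a ^ n * (b - a) ^ 2 + ∫ x in a..b, n * x ^ (n - 1) * (b - x) ^ 2 := by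
  set f : ℝ → ℝ := fun x => n * x ^ (n - 1) * max (b - max a x) 0 ^ 2
  have hf_cont : Continuous f := by fun_prop
  calc ∫ lam in Ioi 0, lebSq (Ioo a b ∩ {x | x ^ n > lam})
      = ∫ x in Ioi 0, f x := by
        rw [← integral_Ioi_comp_pow hn]
        refine setIntegral_congr_fun measurableSet_Ioi fun x (hx : 0 < x) => ?_
        simp only [f, smul_eq_mul, gt_iff_lt, Ioo_inter_setOf_pow_lt_pow ha hx.le b hn, lebSq_Ioo]
    _ = ∫ x in (0)..b, f x := by
        rw [intervalIntegral.integral_of_le (ha.trans hab)]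
        refine setIntegral_eq_of_subset_of_forall_sdiff_eq_zero measurableSet_Ioi
          Ioc_subset_Ioi_self fun x hx => ?_
        have hbx : b < x := not_le.1 fun hxb => hx.2 ⟨hx.1, hxb⟩
        simp [f, le_max_of_le_right hbx.le]
    _ = (∫ x in (0)..a, f x) + ∫ x in a..b, f x :=
        (intervalIntegral.integral_add_adjacent_intervals
          (hf_cont.intervalIntegrable _ _) (hf_cont.intervalIntegrable _ _)).symm
    _ = (∫ x in (0)..a, n * x ^ (n - 1) * (b - a) ^ 2)
          + ∫ x in a..b, n * x ^ (n - 1) * (b - x) ^ 2 := by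
        congr 1
        · refine intervalIntegral.integral_congr fun x hx => ?_
          rw [uIcc_of_le ha] at hx
          simp [f, max_eq_left hx.2, hab]
        · refine intervalIntegral.integral_congr fun x hx => ?_
          rw [uIcc_of_le hab] at hx
          simp [f, max_eq_right hx.1, hx.2]
    _ = _ := by
        rw [intervalIntegral.integral_mul_const,
          intervalIntegral.integral_eq_sub_of_hasDerivAt (fun x _ => hasDerivAt_pow n x)
            (Continuous.intervalIntegrable (by fun_prop) _ _), zero_pow hn, sub_zero]

theorem integral_lebSq_Ioo_inter_pow_zero_gt {a b : ℝ} (hab : a ≤ b) :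
    ∫ lam in Ioi 0, lebSq (Ioo a b ∩ {x | x ^ 0 > lam}) = (b - a) ^ 2 := by
  have h_zero : ∀ lam ∈ Ioi 0 \ Ioo 0 1, lebSq (Ioo a b ∩ {x : ℝ | x ^ 0 > lam}) = 0 := by
    intro lam hlam
    have h_one_le : 1 ≤ lam := not_lt.1 fun hlt => hlam.2 ⟨hlam.1, hlt⟩
    simp [lebSq, not_lt.2 h_one_le]
  have h_const : ∀ lam ∈ Ioo 0 1, lebSq (Ioo a b ∩ {x : ℝ | x ^ 0 > lam}) = (b - a) ^ 2 := by
    intro lam hlam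
    simp [hlam.2, lebSq_Ioo, hab]
  rw [setIntegral_eq_of_subset_of_forall_sdiff_eq_zero measurableSet_Ioi Ioo_subset_Ioi_self h_zero,
    setIntegral_congr_fun measurableSet_Ioo h_const, setIntegral_const, Real.volume_real_Ioo]
  norm_num

theorem stmt_9 (n : ℕ) (a b : ℝ) (ha : 0 ≤ a) (hab : a < b) :
    (∫ lam in Set.Ioi (0 : ℝ), lebSq (Set.Ioo a b ∩ {x | x ^ n > lam})) =
      (2 / (((n : ℝ) + 1) * ((n : ℝ) + 2))) * (b ^ (n + 2) - a ^ (n + 2)) -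
        (2 * a ^ (n + 1) / ((n : ℝ) + 1)) * (b - a) := by
  rcases eq_or_ne n 0 with rfl | hn
  · rw [integral_lebSq_Ioo_inter_pow_zero_gt hab.le]
    ring
  · rw [integral_lebSq_Ioo_inter_pow_gt hn ha hab.le, integral_pow_pred_mul_sq_sub hn]
    field_simp
    ring
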